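/- arXiv:2110.02177 — 2 statements merged into one kernel-verified Lean document; each statement's English description precedes it below -/
import Mathlib

section
/- Let G be an additive commutative group, N a natural number, and let a : Fin N → Fin N → G (pairwise masks), b : Fin N → G (private masks), and x : Fin N → G (local models) be arbitrary. Define the masked models y_i = x_i + b_i + (∑_{j : i < j} a i j) − (∑_{j : j < i} a j i). Then for every partition of Fin N into a set U of surviving users and its complement D of dropped users, ∑_{i ∈ U} (y_i − b_i) + ∑_{i ∈ D} ((∑_{j : i < j} a i j) − (∑_{j : j < i} a j i)) = ∑_{i ∈ U} x_i. That is, the server exactly recovers the aggregate model of the surviving users from the masked models of the surviving users, the private masks of the surviving users, and the pairwise masks of the dropped users. -/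
lemma secagg_mask_sum {G : Type*} [AddCommGroup G] (N : ℕ) (a : Fin N → Fin N → G) :
    ∑ i : Fin N, ((∑ j ∈ Finset.univ.filter (fun j => i < j), a i j)
      - ∑ j ∈ Finset.univ.filter (fun j => j < i), a j i) = 0 := by
  rw [Finset.sum_sub_distrib, sub_eq_zero]
  rw [Finset.sum_comm' (t' := (Finset.univ : Finset (Fin N)))
    (s' := fun j => Finset.univ.filter (fun i => i < j)) (fun i j => by simp)]

/-- SecAgg dropout-recovery correctness: with masked models
`y_i = x_i + b_i + (∑_{j : i < j} a i j) − (∑_{j : j < i} a j i)`,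
for every set `U` of surviving users (with complement `D = Uᶜ` the dropped users),
`∑_{i ∈ U} (y_i − b_i) + ∑_{i ∈ D} ((∑_{j : i < j} a i j) − (∑_{j : j < i} a j i)) = ∑_{i ∈ U} x_i`,
i.e. the server exactly recovers the aggregate model of the surviving users. -/
theorem secagg_dropout_recovery {G : Type*} [AddCommGroup G]
    (N : ℕ) (a : Fin N → Fin N → G) (b x y : Fin N → G)
    (hy : ∀ i, y i = x i + b i
      + (∑ j ∈ Finset.univ.filter (fun j => i < j), a i j)
      - ∑ j ∈ Finset.univ.filter (fun j => j < i), a j i)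
    (U : Finset (Fin N)) :
    (∑ i ∈ U, (y i - b i))
      + ∑ i ∈ Uᶜ, ((∑ j ∈ Finset.univ.filter (fun j => i < j), a i j)
          - ∑ j ∈ Finset.univ.filter (fun j => j < i), a j i)
      = ∑ i ∈ U, x i := by
  have key := secagg_mask_sum N a
  have hsplit : ∑ i ∈ U, ((∑ j ∈ Finset.univ.filter (fun j => i < j), a i j)
      - ∑ j ∈ Finset.univ.filter (fun j => j < i), a j i)
      + ∑ i ∈ Uᶜ, ((∑ j ∈ Finset.univ.filter (fun j => i < j), a i j)
      - ∑ j ∈ Finset.univ.filter (fun j => j < i), a j i) = 0 := by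
    rw [Finset.sum_add_sum_compl]; exact key
  calc (∑ i ∈ U, (y i - b i))
      + ∑ i ∈ Uᶜ, ((∑ j ∈ Finset.univ.filter (fun j => i < j), a i j)
          - ∑ j ∈ Finset.univ.filter (fun j => j < i), a j i)
      = ∑ i ∈ U, (x i + ((∑ j ∈ Finset.univ.filter (fun j => i < j), a i j)
          - ∑ j ∈ Finset.univ.filter (fun j => j < i), a j i))
      + ∑ i ∈ Uᶜ, ((∑ j ∈ Finset.univ.filter (fun j => i < j), a i j)
          - ∑ j ∈ Finset.univ.filter (fun j => j < i), a j i) := by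
        congr 1; apply Finset.sum_congr rfl; intro i _; rw [hy i]; abel
    _ = ∑ i ∈ U, x i := by
        rw [Finset.sum_add_distrib, add_assoc, hsplit, add_zero]
end

section
/- Let q > 2 be a natural number, and define φ : ℤ → ZMod q and φ⁻¹ : ZMod q → ℤ as follows: φ is the canonical reduction modulo q, and φ⁻¹(z) = z.val if z.val < (q − 1)/2 and φ⁻¹(z) = z.val − q otherwise. Let S be a finite set, let w : S → ℤ be integer-valued (quantized) local updates, s : S → ℕ nonnegative integer staleness weights, and z : S → ZMod q arbitrary masks. If the weighted aggregate satisfies −(q + 1)/2 < ∑_{i∈S} s_i · w_i < (q − 1)/2, then φ⁻¹( ∑_{i∈S} (s_i : ZMod q) · (φ(w_i) + z_i) − ∑_{i∈S} (s_i : ZMod q) · z_i ) = ∑_{i∈S} s_i · w_i. That is, the server, given the masked updates φ(w_i) + z_i and the reconstructed weighted aggregate mask ∑ s_i z_i, exactly recovers the weighted aggregate of the quantized updates, regardless of the masks and regardless of the (possibly different) rounds in which the masks were generated. -/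
/-- The two's complement mapping `φ : ℤ → F_q`: canonical reduction modulo `q`
(a nonnegative integer `x` is sent to `x` and a negative integer `x` to `q + x`). -/
def phi (q : ℕ) (x : ℤ) : ZMod q := (x : ZMod q)

/-- The demapping `φ⁻¹ : F_q → ℤ`: `φ⁻¹(z) = z.val` if `z.val < (q − 1)/2`, and
`φ⁻¹(z) = z.val − q` otherwise. -/
def phiInv (q : ℕ) (z : ZMod q) : ℤ :=
  if (z.val : ℤ) < ((q : ℤ) - 1) / 2 then (z.val : ℤ) else (z.val : ℤ) - q

lemma phiInv_intCast (q : ℕ) (hq : 2 < q) (a : ℤ)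
    (hlo : -(((q : ℤ) + 1) / 2) < a) (hhi : a < ((q : ℤ) - 1) / 2) :
    phiInv q ((a : ZMod q)) = a := by
  haveI : NeZero q := ⟨by omega⟩
  have hval : (((a : ZMod q)).val : ℤ) = a % q := ZMod.val_intCast a
  have hq0 : (0 : ℤ) < (q : ℤ) := by exact_mod_cast Nat.zero_lt_of_lt hq
  rcases le_or_gt 0 a with h0 | h0
  · have hmod : a % q = a := Int.emod_eq_of_lt h0 (by omega)
    rw [phiInv, hval, hmod, if_pos hhi]
  · have hmod : a % q = a + q := by
      have h1 : (a + q) % q = a + q := Int.emod_eq_of_lt (by omega) (by omega)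
      have h2 : (a + (q : ℤ)) % (q : ℤ) = a % (q : ℤ) := by
        simp [Int.add_mul_emod_self_left]
      omega
    rw [phiInv, hval, hmod, if_neg (by omega)]
    ring

/-- Correctness of the unmasking in BASecAgg: given the masked quantized updates
`φ(w_i) + z_i` and the reconstructed weighted aggregate mask `∑ s_i z_i`, the server exactly
recovers the weighted aggregate `∑ s_i w_i` of the quantized updates whenever it lies in the
range `(−(q + 1)/2, (q − 1)/2)`, regardless of the masks and of the rounds in which the masks
were generated. -/
theorem basecagg_unmasking_correct {ι : Type*} (q : ℕ) (hq : 2 < q)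
    (S : Finset ι) (w : ι → ℤ) (s : ι → ℕ) (z : ι → ZMod q)
    (hlo : -(((q : ℤ) + 1) / 2) < ∑ i ∈ S, (s i : ℤ) * w i)
    (hhi : (∑ i ∈ S, (s i : ℤ) * w i) < ((q : ℤ) - 1) / 2) :
    phiInv q ((∑ i ∈ S, (s i : ZMod q) * (phi q (w i) + z i))
        - ∑ i ∈ S, (s i : ZMod q) * z i)
      = ∑ i ∈ S, (s i : ℤ) * w i := by
  have key : (∑ i ∈ S, (s i : ZMod q) * (phi q (w i) + z i))
        - ∑ i ∈ S, (s i : ZMod q) * z i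
      = ((∑ i ∈ S, (s i : ℤ) * w i : ℤ) : ZMod q) := by
    rw [← Finset.sum_sub_distrib]
    push_cast [phi]
    apply Finset.sum_congr rfl
    intro i _
    ring
  rw [key]
  exact phiInv_intCast q hq _ hlo hhi
end
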